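/- arXiv:q-bio/0506034 — 7 statements merged into one kernel-verified Lean document; each statement's English description precedes it below -/
import Mathlib

section
/- For integers c, f ≥ 1 with n = c + f ≥ 2, (1/n!) · Σ_{s=2}^{n} (s-1)!·(n-s)!·C(f, s-1) = f/(n·c). -/
open Finset Nat

-- termwise identity
lemma term_eq (c f k : ℕ) (hc : 1 ≤ c) (hk : 1 ≤ k) (hk' : k ≤ c + f - 1) :
    k.factorial * (c + f - 1 - k).factorial * f.choose k
      = f.factorial * (c - 1).factorial * (c + f - 1 - k).choose (c - 1) := by
  rcases le_or_gt k f with h | h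
  · have hj : c + f - 1 - k = (c - 1) + (f - k) := by omega
    rw [hj]
    apply Nat.eq_of_mul_eq_mul_right (Nat.factorial_pos (f - k))
    have h1 : f.choose k * k.factorial * (f - k).factorial = f.factorial :=
      Nat.choose_mul_factorial_mul_factorial h
    have h2 : ((c-1)+(f-k)).choose (c-1) * (c-1).factorial * (f-k).factorial
        = ((c-1)+(f-k)).factorial := by
      have := Nat.choose_mul_factorial_mul_factorial (Nat.le_add_right (c-1) (f-k))
      simpa [Nat.add_sub_cancel_left] using this
    nlinarith [h1, h2]
  · have h1 : f.choose k = 0 := Nat.choose_eq_zero_of_lt h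
    have h2 : (c + f - 1 - k).choose (c - 1) = 0 := Nat.choose_eq_zero_of_lt (by omega)
    simp [h1, h2]

lemma nat_sum (c f : ℕ) (hc : 1 ≤ c) (hf : 1 ≤ f) :
    c * ∑ k ∈ Icc 1 (c + f - 1),
        k.factorial * (c + f - 1 - k).factorial * f.choose k
      = f * (c + f - 1).factorial := by
  have hrw : ∑ k ∈ Icc 1 (c + f - 1),
        k.factorial * (c + f - 1 - k).factorial * f.choose k
      = f.factorial * (c - 1).factorial *
        ∑ k ∈ Icc 1 (c + f - 1), (c + f - 1 - k).choose (c - 1) := by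
    rw [Finset.mul_sum]
    apply Finset.sum_congr rfl
    intro k hk
    simp only [mem_Icc] at hk
    exact term_eq c f k hc hk.1 hk.2
  have hrefl : ∑ k ∈ Icc 1 (c + f - 1), (c + f - 1 - k).choose (c - 1)
      = ∑ i ∈ Icc 0 (c + f - 2), i.choose (c - 1) := by
    apply Finset.sum_nbij' (fun k => c + f - 1 - k) (fun i => c + f - 1 - i)
    · intro a ha; simp only [mem_Icc] at *; omega
    · intro a ha; simp only [mem_Icc] at *; omega
    · intro a ha; simp only [mem_Icc] at ha; omega
    · intro a ha; simp only [mem_Icc] at ha; omega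
    · intro a ha; rfl
  have hdrop : ∑ i ∈ Icc 0 (c + f - 2), i.choose (c - 1)
      = ∑ i ∈ Icc (c-1) (c + f - 2), i.choose (c - 1) := by
    symm
    apply Finset.sum_subset
    · intro x hx; simp only [mem_Icc] at *; omega
    · intro x hx hx'; simp only [mem_Icc] at *
      exact Nat.choose_eq_zero_of_lt (by omega)
  have hhs : ∑ i ∈ Icc (c-1) (c + f - 2), i.choose (c - 1)
      = (c + f - 1).choose c := by
    rw [Nat.sum_Icc_choose]
    congr 1 <;> omega
  rw [hrw, hrefl, hdrop, hhs]
  apply Nat.eq_of_mul_eq_mul_right (Nat.factorial_pos (f-1))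
  -- now: c * (f! * (c-1)! * C(c+f-1, c)) = f * (c+f-1)!
  have key : (c + f - 1).choose c * c.factorial * (f - 1).factorial
      = (c + f - 1).factorial := by
    have := Nat.choose_mul_factorial_mul_factorial (n := c + f - 1) (k := c) (by omega)
    have h : c + f - 1 - c = f - 1 := by omega
    rwa [h] at this
  have hcf : c * (c - 1).factorial = c.factorial := by
    rw [← Nat.succ_pred_eq_of_pos hc, Nat.factorial_succ]; simp
  have hff : f * (f - 1).factorial = f.factorial := by
    rw [← Nat.succ_pred_eq_of_pos hf, Nat.factorial_succ]; simp
  calc c * (f.factorial * (c - 1).factorial * (c + f - 1).choose c) * (f-1).factorial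
        = f.factorial * ((c + f - 1).choose c * (c * (c-1).factorial) * (f-1).factorial) := by ring
    _ = f.factorial * (c + f - 1).factorial := by rw [hcf, key]
    _ = (f * (f-1).factorial) * (c + f - 1).factorial := by rw [hff]
    _ = f * (c + f - 1).factorial * (f-1).factorial := by ring

/-- For integers `c, f ≥ 1` with `n = c + f ≥ 2`,
`(1/n!) · ∑_{s=2}^{n} (s-1)!·(n-s)!·C(f, s-1) = f/(n·c)`. -/
theorem shapley_coefficient_closed_form (n c f : ℕ) (hc : 1 ≤ c) (hf : 1 ≤ f)
    (hn : n = c + f) (h2 : 2 ≤ n) :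
    ((Nat.factorial n : ℝ))⁻¹ *
        ∑ s ∈ Finset.Icc 2 n,
          ((s - 1).factorial : ℝ) * ((n - s).factorial : ℝ) * (Nat.choose f (s - 1) : ℝ) =
      (f : ℝ) / ((n : ℝ) * (c : ℝ)) := by
  subst hn
  have hre : ∑ s ∈ Finset.Icc 2 (c+f),
          (((s - 1).factorial : ℝ)) * ((c + f - s).factorial : ℝ) * (f.choose (s - 1) : ℝ)
      = ((∑ k ∈ Icc 1 (c + f - 1),
          k.factorial * (c + f - 1 - k).factorial * f.choose k : ℕ) : ℝ) := by
    push_cast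
    apply Finset.sum_nbij' (fun s => s - 1) (fun k => k + 1)
    · intro a ha; simp only [mem_Icc] at *; omega
    · intro a ha; simp only [mem_Icc] at *; omega
    · intro a ha; simp only [mem_Icc] at ha; omega
    · intro a ha; simp only [mem_Icc] at ha; omega
    · intro a ha; simp only [mem_Icc] at ha
      have : c + f - 1 - (a - 1) = c + f - a := by omega
      rw [this]
  rw [hre]
  have key := nat_sum c f hc hf
  have keyR : (c : ℝ) * ((∑ k ∈ Icc 1 (c + f - 1),
      k.factorial * (c + f - 1 - k).factorial * f.choose k : ℕ) : ℝ)
      = (f : ℝ) * ((c + f - 1).factorial : ℝ) := by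
    exact_mod_cast congrArg (Nat.cast : ℕ → ℝ) key
  have hfac : ((c + f).factorial : ℝ) = ((c:ℝ) + f) * ((c + f - 1).factorial : ℝ) := by
    have := Nat.mul_factorial_pred (n := c + f) (by omega)
    exact_mod_cast this.symm
  have h1 : ((c+f:ℕ):ℝ) ≠ 0 := by positivity
  have h2 : ((c+f-1).factorial : ℝ) ≠ 0 := by positivity
  have h3 : (c:ℝ) ≠ 0 := by positivity
  have hn : ((c:ℝ) + f) ≠ 0 := by positivity
  rw [hfac]
  field_simp
  push_cast at keyR ⊢
  linear_combination ((c:ℝ) + f) * keyR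
end

section
/- In a tree game on an n-leaf tree, for any leaf i and any edge k, the marginal contribution v_T(S) - v_T(S \ {i}) of leaf i includes the weight of edge k if and only if all other members of S lie in the component of T minus k not containing i. -/
open Finset

/-- Edge-marginality criterion for tree games. An edge of a tree corresponds to the split
of the leaf set `Fin n` given by `s` (one side) and its complement; the edge lies in the
minimal subtree spanning a set `T` of leaves iff `T` meets both sides of the split.
For a coalition `S` containing leaf `i` with `|S| ≥ 2`, the marginal contribution
`v_T(S) - v_T(S \ {i})` includes the weight of the edge iff the edge spans `S` but not
`S \ {i}`, and this holds iff all other members of `S` lie in `F(i,k)`, the side of the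
split not containing `i` (and `S \ {i}` is nonempty). -/
theorem edge_in_marginal_contribution_iff {n : ℕ} (s : Finset (Fin n)) (i : Fin n)
    (S : Finset (Fin n)) (hi : i ∈ S) (hS : 2 ≤ S.card) :
    (((S ∩ s).Nonempty ∧ (S \ s).Nonempty) ∧
        ¬(((S.erase i) ∩ s).Nonempty ∧ ((S.erase i) \ s).Nonempty)) ↔
      (S.erase i ⊆ (if i ∈ s then Finset.univ \ s else s) ∧ (S.erase i).Nonempty) := by
  have hne : (S.erase i).Nonempty := by
    rw [← Finset.card_pos, Finset.card_erase_of_mem hi]; omega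
  split_ifs with h
  · constructor
    · rintro ⟨⟨-, y, hy⟩, hn⟩
      refine ⟨?_, hne⟩
      intro x hx
      rw [Finset.mem_sdiff]
      refine ⟨Finset.mem_univ x, fun hxs => hn ⟨⟨x, Finset.mem_inter.2 ⟨hx, hxs⟩⟩, ?_⟩⟩
      rw [Finset.mem_sdiff] at hy
      exact ⟨y, Finset.mem_sdiff.2 ⟨Finset.mem_erase.2
        ⟨fun hy' => hy.2 (hy' ▸ h), hy.1⟩, hy.2⟩⟩
    · rintro ⟨hsub, x, hx⟩
      have hxs : x ∉ s := (Finset.mem_sdiff.1 (hsub hx)).2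
      refine ⟨⟨⟨i, Finset.mem_inter.2 ⟨hi, h⟩⟩,
        ⟨x, Finset.mem_sdiff.2 ⟨Finset.mem_of_mem_erase hx, hxs⟩⟩⟩, ?_⟩
      rintro ⟨⟨y, hy⟩, -⟩
      rw [Finset.mem_inter] at hy
      exact (Finset.mem_sdiff.1 (hsub hy.1)).2 hy.2
  · constructor
    · rintro ⟨⟨⟨y, hy⟩, -⟩, hn⟩
      refine ⟨?_, hne⟩
      intro x hx
      by_contra hxs
      rw [Finset.mem_inter] at hy
      exact hn ⟨⟨y, Finset.mem_inter.2 ⟨Finset.mem_erase.2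
        ⟨fun hy' => h (hy' ▸ hy.2), hy.1⟩, hy.2⟩⟩,
        ⟨x, Finset.mem_sdiff.2 ⟨hx, hxs⟩⟩⟩
    · rintro ⟨hsub, x, hx⟩
      refine ⟨⟨⟨x, Finset.mem_inter.2 ⟨Finset.mem_of_mem_erase hx, hsub hx⟩⟩,
        ⟨i, Finset.mem_sdiff.2 ⟨hi, h⟩⟩⟩, ?_⟩
      rintro ⟨-, y, hy⟩
      rw [Finset.mem_sdiff] at hy
      exact hy.2 (hsub hy.1)
end

section
/- The Shapley value of an n-leaf tree game is a linear function of the edge weights: φ_i(N, v_T) = Σ_{k ∈ E} (f(i,k)/(n·c(i,k))) · α_k, where α_k is the weight of edge k, and c(i,k), f(i,k) are the numbers of leaves in the components of T−k containing and not containing leaf i, respectively. -/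
/-!
The cut indicator of a split `{s, sᶜ}` decomposes as `[S meets s] + [S meets sᶜ] - [S ≠ ∅]`.
For `i ∈ t`, player `i` is pivotal in the game `[S meets t]` exactly when `S ∩ t = {i}`; summing
the Shapley weights over `S = {i} ∪ T`, `T ⊆ tᶜ`, gives `1 / |t|` by the hockey-stick identity.
By linearity an edge whose `i`-side has `c` leaves therefore contributes
`(1/c - 1/n) α = (n - c)/(n c) · α`.
-/

open Finset

/-- The Shapley value of the game `v` on player set `Fin n`. -/
noncomputable def shapley {n : ℕ} (v : Finset (Fin n) → ℝ) (i : Fin n) : ℝ :=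
  ((n.factorial : ℝ))⁻¹ *
    ∑ S ∈ Finset.univ.powerset.filter (fun S => i ∈ S),
      ((S.card - 1).factorial : ℝ) * ((n - S.card).factorial : ℝ) * (v S - v (S.erase i))

/-- The tree game determined by the splits `side e` and edge weights `α`. -/
noncomputable def treeGame {n : ℕ} {E : Type*} [Fintype E] (side : E → Finset (Fin n))
    (α : E → ℝ) (S : Finset (Fin n)) : ℝ :=
  ∑ e, α e * (if (S ∩ side e).Nonempty ∧ (S \ side e).Nonempty then 1 else 0)

/-- `cnt side i e` is the split count `c(i,e)`: the number of leaves on the side of edge `e`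
containing leaf `i`. -/
def cnt {n : ℕ} {E : Type*} (side : E → Finset (Fin n)) (i : Fin n) (e : E) : ℕ :=
  if i ∈ side e then (side e).card else n - (side e).card

/-- Compatibility of two splits (holds for the splits of edges of a tree). -/
def Compatible {n : ℕ} (s t : Finset (Fin n)) : Prop :=
  s ∩ t = ∅ ∨ s \ t = ∅ ∨ t \ s = ∅ ∨ s ∪ t = Finset.univ
open Nat

noncomputable def shapleyLinearMap {n : ℕ} (i : Fin n) : (Finset (Fin n) → ℝ) →ₗ[ℝ] ℝ where
  toFun v := shapley v i
  map_add' v w := by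
    simp only [shapley, Pi.add_apply, ← mul_add, ← sum_add_distrib]
    congr 1; exact sum_congr rfl fun S _ => by ring
  map_smul' a v := by
    simp only [shapley, Pi.smul_apply, smul_eq_mul, RingHom.id_apply, mul_sum]
    exact sum_congr rfl fun S _ => by ring

@[simp]
theorem shapleyLinearMap_apply {n : ℕ} (i : Fin n) (v : Finset (Fin n) → ℝ) :
    shapleyLinearMap i v = shapley v i := rfl

theorem shapley_eq_sum_powerset_erase {n : ℕ} (v : Finset (Fin n) → ℝ) (i : Fin n) :
    shapley v i = (n ! : ℝ)⁻¹ * ∑ T ∈ (univ.erase i).powerset,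
      ((#T)! : ℝ) * ((n - 1 - #T)! : ℝ) * (v (insert i T) - v T) := by
  have hiT : ∀ T ∈ (univ.erase i).powerset, i ∉ T := fun T hT hi =>
    notMem_erase i _ (mem_powerset.mp hT hi)
  rw [shapley, sum_filter]
  conv_lhs => rw [← insert_erase (mem_univ i), sum_powerset_insert (notMem_erase i _)]
  rw [sum_eq_zero fun T hT => if_neg (hiT T hT), zero_add]
  refine congrArg _ (sum_congr rfl fun T hT => ?_)
  rw [if_pos (mem_insert_self i T), card_insert_of_notMem (hiT T hT), erase_insert (hiT T hT),
    add_tsub_cancel_right, Nat.sub_sub, add_comm 1]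

theorem choose_mul_factorial_mul_factorial_add {f j : ℕ} (m : ℕ) (hj : j ≤ f) :
    f.choose j * j ! * (f + m - j)! = f ! * m ! * (f - j + m).choose m := by
  refine Nat.eq_of_mul_eq_mul_right (factorial_pos (f - j)) ?_
  calc f.choose j * j ! * (f + m - j)! * (f - j)!
      = f.choose j * j ! * (f - j)! * (f + m - j)! := by ring
    _ = f ! * ((f - j + m).choose m * (f - j)! * m !) := by
        rw [choose_mul_factorial_mul_factorial hj, add_choose_mul_factorial_mul_factorial,
          Nat.sub_add_comm hj]
    _ = f ! * m ! * (f - j + m).choose m * (f - j)! := by ring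

theorem mul_sum_choose_mul_factorial_mul_factorial {c f n : ℕ} (hc : 0 < c) (hn : f + c = n) :
    c * ∑ j ∈ range (f + 1), f.choose j * (j ! * (n - 1 - j)!) = n ! := by
  obtain ⟨m, rfl⟩ := Nat.exists_eq_add_one_of_ne_zero hc.ne'
  subst hn
  -- `f + 1 - 1 - j` is the shape `sum_range_reflect` expects.
  have hsum : ∑ j ∈ range (f + 1), f.choose j * (j ! * (f + (m + 1) - 1 - j)!) =
      f ! * m ! * ∑ j ∈ range (f + 1), (f + 1 - 1 - j + m).choose m := by
    rw [mul_sum]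
    refine sum_congr rfl fun j hj => ?_
    rw [← mul_assoc, Nat.add_succ_sub_one,
      choose_mul_factorial_mul_factorial_add m (mem_range_succ_iff.mp hj), add_tsub_cancel_right]
  rw [hsum, sum_range_reflect (fun j => (j + m).choose m), sum_range_add_choose,
    ← add_choose_mul_factorial_mul_factorial f (m + 1), factorial_succ, add_assoc]
  ring

def meetsGame {n : ℕ} (t S : Finset (Fin n)) : ℝ := if Disjoint S t then 0 else 1

theorem shapley_meetsGame_of_mem {n : ℕ} {t : Finset (Fin n)} {i : Fin n} (hi : i ∈ t) :
    shapley (meetsGame t) i = (#t : ℝ)⁻¹ := by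
  have hmarg : ∀ T : Finset (Fin n), meetsGame t (insert i T) - meetsGame t T =
      if Disjoint T t then 1 else 0 := fun T => by
    have : ¬Disjoint (insert i T) t := fun h => disjoint_left.mp h (mem_insert_self i T) hi
    simp only [meetsGame, if_neg this]
    split_ifs <;> norm_num
  have hfilter : {T ∈ (univ.erase i).powerset | Disjoint T t} = tᶜ.powerset := by
    ext T
    simp only [mem_filter, mem_powerset, subset_compl_iff_disjoint_right]
    refine ⟨And.right, fun h => ⟨fun x hx => mem_erase.mpr ⟨?_, mem_univ x⟩, h⟩⟩
    rintro rfl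
    exact disjoint_left.mp h hx hi
  have ht : 0 < #t := card_pos.mpr ⟨i, hi⟩
  have key := congrArg (Nat.cast : ℕ → ℝ) (mul_sum_choose_mul_factorial_mul_factorial ht
    ((card_compl_add_card t).trans (Fintype.card_fin n)))
  push_cast at key
  simp_rw [shapley_eq_sum_powerset_erase, hmarg, mul_ite, mul_one, mul_zero, ← sum_filter, hfilter,
    sum_powerset_apply_card (fun j => (j ! : ℝ) * ((n - 1 - j)! : ℝ)), nsmul_eq_mul]
  rw [inv_mul_eq_iff_eq_mul₀ (by positivity), ← key]
  field_simp

theorem shapley_meetsGame_of_notMem {n : ℕ} {t : Finset (Fin n)} {i : Fin n} (hi : i ∉ t) :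
    shapley (meetsGame t) i = 0 := by
  simp [shapley_eq_sum_powerset_erase, meetsGame, disjoint_insert_left, hi]

def cutGame {n : ℕ} (s S : Finset (Fin n)) : ℝ :=
  if (S ∩ s).Nonempty ∧ (S \ s).Nonempty then 1 else 0

theorem cutGame_eq_meetsGame {n : ℕ} (s : Finset (Fin n)) :
    cutGame s = meetsGame s + meetsGame sᶜ - meetsGame univ := by
  funext S
  simp only [cutGame, meetsGame, Pi.add_apply, Pi.sub_apply, sdiff_eq_inter_compl,
    ← not_disjoint_iff_nonempty_inter]
  simp_rw [← union_compl s, disjoint_union_right]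
  by_cases h : Disjoint S s <;> by_cases h' : Disjoint S sᶜ <;> simp [h, h']

theorem cutGame_compl {n : ℕ} (s : Finset (Fin n)) : cutGame sᶜ = cutGame s := by
  rw [cutGame_eq_meetsGame, cutGame_eq_meetsGame, compl_compl, add_comm (meetsGame sᶜ)]

theorem shapley_cutGame_of_mem {n : ℕ} {s : Finset (Fin n)} {i : Fin n} (hi : i ∈ s) :
    shapley (cutGame s) i = ((n - #s : ℕ) : ℝ) / (n * #s) := by
  have hs : 0 < #s := card_pos.mpr ⟨i, hi⟩
  have hsn : #s ≤ n := (card_le_univ s).trans_eq (Fintype.card_fin n)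
  rw [← shapleyLinearMap_apply, cutGame_eq_meetsGame, map_sub, map_add]
  simp only [shapleyLinearMap_apply]
  rw [shapley_meetsGame_of_mem hi, shapley_meetsGame_of_notMem (notMem_compl.mpr hi),
    shapley_meetsGame_of_mem (mem_univ i), Finset.card_univ, Fintype.card_fin, add_zero,
    inv_sub_inv (Nat.cast_ne_zero.mpr hs.ne') (Nat.cast_ne_zero.mpr (hs.trans_le hsn).ne'),
    Nat.cast_sub hsn, mul_comm]

theorem shapley_cutGame_eq_cnt {n : ℕ} {E : Type*} (side : E → Finset (Fin n)) (i : Fin n)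
    (e : E) : shapley (cutGame (side e)) i = ((n - cnt side i e : ℕ) : ℝ) / (n * cnt side i e) := by
  by_cases h : i ∈ side e
  · rw [cnt, if_pos h, shapley_cutGame_of_mem h]
  · rw [cnt, if_neg h, ← cutGame_compl, shapley_cutGame_of_mem (mem_compl.mpr h), card_compl,
      Fintype.card_fin]

theorem treeGame_eq_sum_smul_cutGame {n : ℕ} {E : Type*} [Fintype E] (side : E → Finset (Fin n))
    (α : E → ℝ) : treeGame side α = ∑ e, α e • cutGame (side e) := by
  funext S
  simp [treeGame, cutGame, Finset.sum_apply]

theorem shapley_eq_split_count_combination_general {n : ℕ} {E : Type*} [Fintype E]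
    (side : E → Finset (Fin n))
    (α : E → ℝ) (i : Fin n) :
    shapley (treeGame side α) i =
      ∑ e, ((n - cnt side i e : ℕ) : ℝ) / ((n : ℝ) * (cnt side i e : ℝ)) * α e := by
  rw [← shapleyLinearMap_apply, treeGame_eq_sum_smul_cutGame, map_sum]
  simp [shapley_cutGame_eq_cnt, mul_comm]

/-- The Shapley value of an `n`-leaf tree game is linear in the edge weights:
`φ_i = ∑_k (f(i,k)/(n·c(i,k))) · α_k`, where `c(i,k)` and `f(i,k) = n - c(i,k)` are the
numbers of leaves in the components of `T − k` containing and not containing leaf `i`. -/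
theorem shapley_eq_split_count_combination {n : ℕ} {E : Type*} [Fintype E]
    (hn : 2 ≤ n) (side : E → Finset (Fin n))
    (hnontriv : ∀ e, (side e).Nonempty ∧ side e ≠ Finset.univ)
    (hcompat : ∀ e e', Compatible (side e) (side e'))
    (α : E → ℝ) (i : Fin n) :
    shapley (treeGame side α) i =
      ∑ e, ((n - cnt side i e : ℕ) : ℝ) / ((n : ℝ) * (cnt side i e : ℝ)) * α e :=
  shapley_eq_split_count_combination_general side α i
end

section
/- Let T be an n-leaf tree (n ≥ 4) with internal edge I_k. Define the vector w ∈ ℝ^{2n-3} with leaf-coordinates w_i = −(f(i,k)−1)/((n−2)·c(i,k)) for each leaf i, coordinate 1 at internal edge I_k, and 0 at all other internal edges. Then M·w = 0, where M is the Shapley transformation matrix with M[i,j] = f(i,j)/(n·c(i,j)). -/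
open Finset

/-- For an `n`-leaf tree (`n ≥ 4`) with leaf edges `Sum.inl j` (whose split is `{j}`)
and internal edges `Sum.inr k`, the vector `w` with leaf coordinates
`w_i = −(f(i,k)−1)/((n−2)·c(i,k))`, coordinate `1` at internal edge `I_k` and `0` at the
other internal edges, lies in the null space of the Shapley transformation
`M[i,e] = f(i,e)/(n·c(i,e))`. -/
theorem nullspace_vector_of_internal_edge {n : ℕ} (hn : 4 ≤ n)
    (side : Fin n ⊕ Fin (n - 3) → Finset (Fin n))
    (hleaf : ∀ j : Fin n, side (Sum.inl j) = {j})
    (hnontriv : ∀ e, (side e).Nonempty ∧ side e ≠ Finset.univ)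
    (hcompat : ∀ e e', Compatible (side e) (side e'))
    (k : Fin (n - 3)) :
    let c : Fin n → Fin n ⊕ Fin (n - 3) → ℝ := fun i e => (cnt side i e : ℝ)
    let f : Fin n → Fin n ⊕ Fin (n - 3) → ℝ := fun i e => (n : ℝ) - c i e
    let M : Matrix (Fin n) (Fin n ⊕ Fin (n - 3)) ℝ := fun i e => f i e / ((n : ℝ) * c i e)
    let w : Fin n ⊕ Fin (n - 3) → ℝ := fun e =>
      match e with
      | Sum.inl j => -((f j (Sum.inr k) - 1) / (((n : ℝ) - 2) * c j (Sum.inr k)))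
      | Sum.inr k' => if k' = k then 1 else 0
    M.mulVec w = 0 := by
  intro c f M w
  have hn4 : (4 : ℝ) ≤ (n : ℝ) := by exact_mod_cast hn
  have hn0 : (n : ℝ) ≠ 0 := by linarith
  have hn1 : (n : ℝ) - 1 ≠ 0 := by linarith
  have hn2 : (n : ℝ) - 2 ≠ 0 := by linarith
  obtain ⟨hSne, hSuniv⟩ := hnontriv (Sum.inr k)
  have hs1 : 1 ≤ (side (Sum.inr k)).card := Finset.card_pos.mpr hSne
  have hs2 : (side (Sum.inr k)).card < n := by
    have h := Finset.card_lt_card (Finset.ssubset_univ_iff.mpr hSuniv)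
    simpa using h
  have hsc0 : ((side (Sum.inr k)).card : ℝ) ≠ 0 := by
    have : (1 : ℝ) ≤ ((side (Sum.inr k)).card : ℝ) := by exact_mod_cast hs1
    linarith
  have hns : (n : ℝ) - ((side (Sum.inr k)).card : ℝ) ≠ 0 := by
    have : ((side (Sum.inr k)).card : ℝ) < (n : ℝ) := by exact_mod_cast hs2
    linarith
  have hc : ∀ j : Fin n, c j (Sum.inr k) =
      if j ∈ side (Sum.inr k) then ((side (Sum.inr k)).card : ℝ)
      else (n : ℝ) - ((side (Sum.inr k)).card : ℝ) := by
    intro j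
    simp only [c, cnt]
    split
    · rfl
    · rw [Nat.cast_sub hs2.le]
  have hw : ∀ j : Fin n, w (Sum.inl j) =
      -(((n : ℝ) - c j (Sum.inr k) - 1) / (((n : ℝ) - 2) * c j (Sum.inr k))) := fun j => rfl
  have hci' : ∀ i : Fin n, c i (Sum.inr k) ≠ 0 := by
    intro i
    rw [hc i]
    split
    · exact hsc0
    · exact hns
  have hMl : ∀ i j : Fin n, M i (Sum.inl j) =
      if i = j then ((n : ℝ) - 1) / ((n : ℝ) * 1)
      else 1 / ((n : ℝ) * ((n : ℝ) - 1)) := by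
    intro i j
    have hcl : c i (Sum.inl j) = if i = j then (1 : ℝ) else (n : ℝ) - 1 := by
      simp only [c, cnt, hleaf j, Finset.mem_singleton, Finset.card_singleton]
      split
      · norm_num
      · rw [Nat.cast_sub (by omega : 1 ≤ n)]
        norm_num
    simp only [M, f, hcl]
    split
    · norm_num
    · rw [show (n : ℝ) - ((n : ℝ) - 1) = 1 from by ring]
  have hsum : ∑ j : Fin n, w (Sum.inl j) = -1 := by
    have h1 : ∀ j : Fin n, w (Sum.inl j) =
        if j ∈ side (Sum.inr k) then
          -(((n : ℝ) - ((side (Sum.inr k)).card : ℝ) - 1) /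
            (((n : ℝ) - 2) * ((side (Sum.inr k)).card : ℝ)))
        else
          -((((side (Sum.inr k)).card : ℝ) - 1) /
            (((n : ℝ) - 2) * ((n : ℝ) - ((side (Sum.inr k)).card : ℝ)))) := by
      intro j
      rw [hw j, hc j]
      split
      · rfl
      · ring_nf
    rw [Finset.sum_congr rfl (fun j _ => h1 j), Finset.sum_ite, Finset.sum_const,
      Finset.sum_const]
    have hfilter1 : Finset.univ.filter (· ∈ side (Sum.inr k)) = side (Sum.inr k) := by
      ext x; simp
    have hfilter2 :
        (Finset.univ.filter (fun x => ¬ x ∈ side (Sum.inr k))).card = n - (side (Sum.inr k)).card := by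
      rw [Finset.filter_not, hfilter1]
      simp [Finset.card_sdiff_of_subset (Finset.subset_univ _)]
    rw [hfilter1, hfilter2]
    rw [nsmul_eq_mul, nsmul_eq_mul, Nat.cast_sub hs2.le]
    field_simp
    ring
  funext i
  show (∑ e, M i e * w e) = 0
  rw [Fintype.sum_sum_type]
  have hwr : ∀ k' : Fin (n - 3), w (Sum.inr k') = if k' = k then 1 else 0 := fun _ => rfl
  have hsum2 : ∑ k' : Fin (n - 3), M i (Sum.inr k') * w (Sum.inr k') = M i (Sum.inr k) := by
    simp only [hwr, mul_ite, mul_one, mul_zero]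
    rw [Finset.sum_ite_eq' Finset.univ k]
    simp
  rw [hsum2]
  rw [← Finset.sum_erase_add Finset.univ _ (Finset.mem_univ i)]
  have herase : ∑ j ∈ Finset.univ.erase i, M i (Sum.inl j) * w (Sum.inl j)
      = (-1 - w (Sum.inl i)) / ((n : ℝ) * ((n : ℝ) - 1)) := by
    have h2 : ∀ j ∈ Finset.univ.erase i, M i (Sum.inl j) * w (Sum.inl j)
        = w (Sum.inl j) * (1 / ((n : ℝ) * ((n : ℝ) - 1))) := by
      intro j hj
      rw [hMl i j, if_neg (Ne.symm (Finset.ne_of_mem_erase hj))]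
      ring
    rw [Finset.sum_congr rfl h2, ← Finset.sum_mul,
      Finset.sum_erase_eq_sub (Finset.mem_univ i), hsum]
    ring
  rw [herase, hMl i i, if_pos rfl, hw i]
  have hMr : M i (Sum.inr k) = ((n : ℝ) - c i (Sum.inr k)) / ((n : ℝ) * c i (Sum.inr k)) := rfl
  rw [hMr]
  have hci := hci' i
  field_simp
  ring
end

section
/- The Shapley transformation matrix M of an n-leaf tree game (n ≥ 3) is surjective as a linear map from ℝ^{2n-3} to ℝ^n: every vector in ℝ^n is the Shapley value of some (possibly negatively) weighted tree with the given topology. -/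
open Finset

/-- The Shapley transformation matrix `M[i,e] = f(i,e)/(n·c(i,e))` of an `n`-leaf tree game
(`n ≥ 3`, with `n` leaf edges `Sum.inl j` of split `{j}` and `n−3` internal edges
`Sum.inr k`) is surjective as a linear map `ℝ^{2n−3} → ℝ^n`: every vector in `ℝ^n` is the
Shapley value of some (possibly negatively) weighted tree with the given topology. -/
theorem shapley_transformation_surjective {n : ℕ} (hn : 3 ≤ n)
    (side : Fin n ⊕ Fin (n - 3) → Finset (Fin n))
    (hleaf : ∀ j : Fin n, side (Sum.inl j) = {j})
    (hnontriv : ∀ e, (side e).Nonempty ∧ side e ≠ Finset.univ)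
    (hcompat : ∀ e e', Compatible (side e) (side e')) :
    let M : Matrix (Fin n) (Fin n ⊕ Fin (n - 3)) ℝ := fun i e =>
      ((n - cnt side i e : ℕ) : ℝ) / ((n : ℝ) * (cnt side i e : ℝ))
    Function.Surjective M.mulVec := by
  intro M v
  have hn3 : (3:ℝ) ≤ (n:ℝ) := by exact_mod_cast hn
  set N : ℝ := (n:ℝ) with hN
  have hN0 : N ≠ 0 := by intro h; rw [h] at hn3; linarith
  have hN1 : N - 1 ≠ 0 := by intro h; nlinarith
  set b : ℝ := 1 / (N * (N - 1)) with hb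
  set a : ℝ := (N - 1)/N - b with hadef
  have ha : a = (N - 2)/(N - 1) := by
    rw [hadef, hb]; field_simp; ring
  have ha0 : a ≠ 0 := by
    rw [ha]
    intro h
    have : N - 2 = 0 := by
      field_simp at h; linarith [h]
    nlinarith
  have hab : a + N * b = 1 := by
    rw [hadef, hb]; field_simp; ring
  set S : ℝ := ∑ t, v t with hS
  refine ⟨Sum.elim (fun j => (v j - b * S)/a) (fun _ => 0), ?_⟩
  have hMleaf : ∀ i j : Fin n, M i (Sum.inl j) = if i = j then (N-1)/N else b := by
    intro i j
    have h1 : 1 ≤ n := by omega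
    have hc : cnt side i (Sum.inl j) = if i = j then 1 else n - 1 := by
      simp only [cnt, hleaf, Finset.mem_singleton, Finset.card_singleton]
    show ((n - cnt side i (Sum.inl j) : ℕ) : ℝ) / ((n : ℝ) * (cnt side i (Sum.inl j) : ℝ))
        = if i = j then (N-1)/N else b
    rw [hc]
    by_cases hij : i = j
    · simp [hij, Nat.cast_sub h1, hN]
    · simp only [hij, if_false]
      rw [Nat.sub_sub_self h1, Nat.cast_sub h1]
      simp [hb, hN]
  funext i
  have key : M.mulVec (Sum.elim (fun j => (v j - b * S)/a) (fun _ => 0)) i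
      = ∑ j : Fin n, (if i = j then (N-1)/N else b) * ((v j - b * S)/a) := by
    simp only [Matrix.mulVec, dotProduct, Fintype.sum_sum_type, Sum.elim_inl, Sum.elim_inr,
      mul_zero, Finset.sum_const_zero, add_zero]
    exact Finset.sum_congr rfl fun j _ => by rw [hMleaf]
  rw [key]
  have split : ∀ j : Fin n, (if i = j then (N-1)/N else b) * ((v j - b * S)/a)
      = b * ((v j - b * S)/a) + (if i = j then a * ((v j - b * S)/a) else 0) := by
    intro j
    by_cases hij : i = j <;> simp [hij, hadef] <;> ring
  rw [Finset.sum_congr rfl fun j _ => split j, Finset.sum_add_distrib,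
    Finset.sum_ite_eq, if_pos (Finset.mem_univ i), ← Finset.mul_sum]
  have hsum : ∑ j : Fin n, (v j - b * S)/a = S := by
    rw [← Finset.sum_div, Finset.sum_sub_distrib, ← hS, Finset.sum_const,
      Finset.card_univ, Fintype.card_fin, nsmul_eq_mul, ← hN]
    have h1 : S - N * (b * S) = a * S := by rw [hadef, hb]; field_simp; ring
    rw [h1, mul_comm, mul_div_assoc, div_self ha0, mul_one]
  rw [hsum, mul_comm a, div_mul_cancel₀ _ ha0]
  ring
end

section
/- If ψ satisfies symmetry, Pareto efficiency, and group proportionality on basis games, then the constant d in the group proportionality axiom must equal 1, and ψ_i(v_k) = f(i,k)/(n·c(i,k)) for every leaf i and edge k. -/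
open Finset

/-- The basis game `v_k` of edge `k`: edge `k` has weight `1`, all other edges weight `0`. -/
noncomputable def basisGame {n : ℕ} {E : Type*} [Fintype E] [DecidableEq E]
    (side : E → Finset (Fin n)) (k : E) : Finset (Fin n) → ℝ :=
  treeGame side (fun e => if e = k then 1 else 0)

lemma basisGame_apply {n : ℕ} {E : Type*} [Fintype E] [DecidableEq E]
    (side : E → Finset (Fin n)) (k : E) (S : Finset (Fin n)) :
    basisGame side k S = if (S ∩ side k).Nonempty ∧ (S \ side k).Nonempty then 1 else 0 := by
  unfold basisGame treeGame
  rw [Fintype.sum_eq_single k]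
  · simp
  · intro e he; simp [he]

lemma swap_mem_iff {n : ℕ} (A : Finset (Fin n)) {i j : Fin n}
    (h : i ∈ A ↔ j ∈ A) (x : Fin n) : Equiv.swap i j x ∈ A ↔ x ∈ A := by
  rcases eq_or_ne x i with rfl | hxi
  · simp [Equiv.swap_apply_left, h]
  rcases eq_or_ne x j with rfl | hxj
  · simp [Equiv.swap_apply_right, h.symm]
  · rw [Equiv.swap_apply_of_ne_of_ne hxi hxj]

lemma image_inter_nonempty_iff {n : ℕ} (A S : Finset (Fin n)) (σ : Equiv.Perm (Fin n))
    (hσ : ∀ x, σ x ∈ A ↔ x ∈ A) :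
    ((S.image σ) ∩ A).Nonempty ↔ (S ∩ A).Nonempty := by
  constructor
  · rintro ⟨x, hx⟩
    rw [Finset.mem_inter, Finset.mem_image] at hx
    obtain ⟨⟨y, hy, rfl⟩, hxA⟩ := hx
    exact ⟨y, Finset.mem_inter.mpr ⟨hy, (hσ y).mp hxA⟩⟩
  · rintro ⟨x, hx⟩
    rw [Finset.mem_inter] at hx
    exact ⟨σ x, Finset.mem_inter.mpr ⟨Finset.mem_image_of_mem σ hx.1, (hσ x).mpr hx.2⟩⟩

lemma image_sdiff_nonempty_iff {n : ℕ} (A S : Finset (Fin n)) (σ : Equiv.Perm (Fin n))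
    (hσ : ∀ x, σ x ∈ A ↔ x ∈ A) :
    ((S.image σ) \ A).Nonempty ↔ (S \ A).Nonempty := by
  constructor
  · rintro ⟨x, hx⟩
    rw [Finset.mem_sdiff, Finset.mem_image] at hx
    obtain ⟨⟨y, hy, rfl⟩, hxA⟩ := hx
    exact ⟨y, Finset.mem_sdiff.mpr ⟨hy, fun h => hxA ((hσ y).mpr h)⟩⟩
  · rintro ⟨x, hx⟩
    rw [Finset.mem_sdiff] at hx
    exact ⟨σ x, Finset.mem_sdiff.mpr ⟨Finset.mem_image_of_mem σ hx.1,
      fun h => hx.2 ((hσ x).mp h)⟩⟩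

/-- If `ψ` satisfies symmetry, Pareto efficiency, and group proportionality on basis games,
then the constant `d` in the group proportionality axiom equals `1`, and
`ψ_i(v_k) = f(i,k)/(n·c(i,k))` for every leaf `i` and edge `k`. -/
theorem group_proportionality_constant_eq_one {n : ℕ} {E : Type*} [Fintype E]
    [DecidableEq E] [Nonempty E] (hn : 2 ≤ n) (side : E → Finset (Fin n))
    (hnontriv : ∀ e, (side e).Nonempty ∧ side e ≠ Finset.univ)
    (ψ : (Finset (Fin n) → ℝ) → Fin n → ℝ) (d : ℝ)
    -- symmetry on `V^{N,E}`
    (hsym : ∀ (π : Equiv.Perm (Fin n)) (α β : E → ℝ),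
      (∀ S, treeGame side β S = treeGame side α (S.image π.symm)) →
      ∀ i, ψ (treeGame side β) i = ψ (treeGame side α) (π.symm i))
    -- Pareto efficiency on basis games
    (heff : ∀ k : E, ∑ i, ψ (basisGame side k) i = basisGame side k Finset.univ)
    -- group proportionality on basis games, with constant `d`
    (hprop : ∀ (i : Fin n) (k : E),
      ∑ j ∈ (if i ∈ side k then side k else Finset.univ \ side k), ψ (basisGame side k) j =
        d * ((n - cnt side i k : ℕ) : ℝ) / (n : ℝ)) :
    d = 1 ∧ ∀ (i : Fin n) (k : E),
      ψ (basisGame side k) i =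
        ((n - cnt side i k : ℕ) : ℝ) / ((n : ℝ) * (cnt side i k : ℝ)) := by
  have hn0 : (n : ℝ) ≠ 0 := by positivity
  have hcard_lt : ∀ k : E, (side k).card < n := by
    intro k
    have h := Finset.card_lt_card (lt_of_le_of_ne (Finset.subset_univ _) (hnontriv k).2)
    simpa using h
  have ha_pos : ∀ k : E, 0 < (side k).card := fun k => Finset.card_pos.mpr (hnontriv k).1
  -- symmetry: ψ on a basis game is constant on each side
  have hψeq : ∀ (k : E) (i j : Fin n), (i ∈ side k ↔ j ∈ side k) →
      ψ (basisGame side k) i = ψ (basisGame side k) j := by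
    intro k i j hij
    set α : E → ℝ := fun e => if e = k then 1 else 0 with hα
    have hσ : ∀ x, Equiv.swap i j x ∈ side k ↔ x ∈ side k := swap_mem_iff (side k) hij
    have key : ∀ S, treeGame side α S = treeGame side α (S.image (Equiv.swap i j).symm) := by
      intro S
      have h1 : treeGame side α S = basisGame side k S := rfl
      have h2 : treeGame side α (S.image (Equiv.swap i j).symm)
          = basisGame side k (S.image (Equiv.swap i j).symm) := rfl
      rw [h1, h2, basisGame_apply, basisGame_apply]
      simp only [Equiv.symm_swap, image_inter_nonempty_iff _ _ _ hσ,
        image_sdiff_nonempty_iff _ _ _ hσ]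
    have := hsym (Equiv.swap i j) α α key i
    rw [Equiv.symm_swap, Equiv.swap_apply_left] at this
    exact this
  -- sums over the two groups
  have hsumA : ∀ k : E, ∑ j ∈ side k, ψ (basisGame side k) j =
      d * ((n - (side k).card : ℕ) : ℝ) / (n : ℝ) := by
    intro k
    obtain ⟨i, hi⟩ := (hnontriv k).1
    have h := hprop i k
    rwa [if_pos hi, cnt, if_pos hi] at h
  have hsumB : ∀ k : E, ∑ j ∈ Finset.univ \ side k, ψ (basisGame side k) j =
      d * ((side k).card : ℝ) / (n : ℝ) := by
    intro k
    obtain ⟨i, _, hi⟩ := Finset.exists_of_ssubset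
      (lt_of_le_of_ne (Finset.subset_univ _) (hnontriv k).2)
    have h := hprop i k
    rwa [if_neg hi, cnt, if_neg hi, Nat.sub_sub_self (hcard_lt k).le] at h
  have huniv : ∀ k : E, basisGame side k Finset.univ = 1 := by
    intro k
    rw [basisGame_apply, if_pos]
    constructor
    · obtain ⟨i, hi⟩ := (hnontriv k).1
      exact ⟨i, Finset.mem_inter.mpr ⟨Finset.mem_univ i, hi⟩⟩
    · rw [Finset.sdiff_nonempty]
      intro h
      exact (hnontriv k).2 (Finset.eq_univ_iff_forall.mpr fun x => h (Finset.mem_univ x))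
  have hd : d = 1 := by
    obtain ⟨k⟩ := ‹Nonempty E›
    have hsplit := Finset.sum_sdiff (f := ψ (basisGame side k)) (Finset.subset_univ (side k))
    rw [hsumA k, hsumB k, heff k, huniv k] at hsplit
    have hc : ((n - (side k).card : ℕ) : ℝ) = (n : ℝ) - ((side k).card : ℝ) :=
      Nat.cast_sub (hcard_lt k).le
    rw [hc] at hsplit
    field_simp at hsplit
    have h2 : d * (n:ℝ) = 1 * (n:ℝ) := by linear_combination hsplit
    exact mul_right_cancel₀ hn0 h2
  refine ⟨hd, fun i k => ?_⟩
  by_cases hi : i ∈ side k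
  · have hconst : ∑ j ∈ side k, ψ (basisGame side k) j =
        ((side k).card : ℝ) * ψ (basisGame side k) i := by
      rw [Finset.sum_congr rfl (fun j hj => hψeq k j i ⟨fun _ => hi, fun _ => hj⟩)]
      rw [Finset.sum_const, nsmul_eq_mul]
    have h := hsumA k
    rw [hconst, hd, one_mul] at h
    rw [cnt, if_pos hi]
    have hca : ((side k).card : ℝ) ≠ 0 := Nat.cast_ne_zero.mpr (ha_pos k).ne'
    field_simp at h ⊢
    linarith
  · have hmem : ∀ j, j ∈ Finset.univ \ side k ↔ j ∉ side k := by
      intro j; simp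
    have hconst : ∑ j ∈ Finset.univ \ side k, ψ (basisGame side k) j =
        ((Finset.univ \ side k).card : ℝ) * ψ (basisGame side k) i := by
      rw [Finset.sum_congr rfl (fun j hj => hψeq k j i
        ⟨fun h => absurd h ((hmem j).mp hj), fun h => absurd h hi⟩)]
      rw [Finset.sum_const, nsmul_eq_mul]
    have hcardB : (Finset.univ \ side k).card = n - (side k).card := by
      rw [Finset.card_sdiff_of_subset (Finset.subset_univ _)]
      simp
    have h := hsumB k
    rw [hconst, hd, one_mul, hcardB] at h
    rw [cnt, if_neg hi, Nat.sub_sub_self (hcard_lt k).le]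
    have hb0 : (0:ℕ) < n - (side k).card := Nat.sub_pos_of_lt (hcard_lt k)
    have hcb : ((n - (side k).card : ℕ) : ℝ) ≠ 0 := Nat.cast_ne_zero.mpr hb0.ne'
    field_simp at h ⊢
    linarith
end

section
/- Let T be an n-leaf tree game with n ≥ 4 and nonnegative edge weights. If some internal edge weight is strictly positive, then the core of the game (N, v_T) is empty. -/
open Finset

/-- For an `n`-leaf tree game with `n ≥ 4` and nonnegative edge weights, if some internal
edge (an edge both of whose sides contain at least `2` leaves) has strictly positive
weight, then the core of the game is empty. -/
theorem core_empty_of_positive_internal_edge {n : ℕ} {E : Type*} [Fintype E]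
    (hn : 4 ≤ n) (side : E → Finset (Fin n))
    (hnontriv : ∀ e, (side e).Nonempty ∧ side e ≠ Finset.univ)
    (hcompat : ∀ e e', Compatible (side e) (side e'))
    (α : E → ℝ) (hα : ∀ e, 0 ≤ α e)
    (e₀ : E) (hint : 2 ≤ (side e₀).card ∧ (side e₀).card ≤ n - 2) (hpos : 0 < α e₀) :
    ¬∃ x : Fin n → ℝ,
      (∑ i, x i = treeGame side α Finset.univ) ∧
        ∀ S : Finset (Fin n), treeGame side α S ≤ ∑ i ∈ S, x i := by
  classical
  rintro ⟨x, hx, hcore⟩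
  obtain ⟨hc2, hcn⟩ := hint
  obtain ⟨⟨a, ha⟩, hne₀⟩ := hnontriv e₀
  obtain ⟨b, hb⟩ : ∃ b, b ∉ side e₀ := by
    by_contra h
    push_neg at h
    exact hne₀ (eq_univ_iff_forall.mpr h)
  have hab : a ≠ b := fun h => hb (h ▸ ha)
  obtain ⟨c, hc, hca⟩ := Finset.exists_mem_ne (s := side e₀) (by omega) a
  have hcb : c ≠ b := fun h => hb (h ▸ hc)
  have hcardc : 2 ≤ (univ \ side e₀).card := by
    have h1 := Finset.card_sdiff_of_subset (subset_univ (side e₀))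
    simp only [card_univ, Fintype.card_fin] at h1
    omega
  obtain ⟨d, hd, hdb⟩ := Finset.exists_mem_ne hcardc b
  have hd' : d ∉ side e₀ := (mem_sdiff.mp hd).2
  have hda : d ≠ a := fun h => hd' (h ▸ ha)
  set P : Finset (Fin n) := {a, b} with hP
  set Q : Finset (Fin n) := univ \ P with hQ
  have hmemP : ∀ i : Fin n, i ∈ P ↔ i = a ∨ i = b := by
    intro i; simp [hP]
  have hmemQ : ∀ i : Fin n, i ∈ Q ↔ i ≠ a ∧ i ≠ b := by
    intro i; simp [hQ, hP, not_or]
  have haP : a ∈ P := (hmemP a).mpr (Or.inl rfl)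
  have hbP : b ∈ P := (hmemP b).mpr (Or.inr rfl)
  have hcQ : c ∈ Q := (hmemQ c).mpr ⟨hca, hcb⟩
  have hdQ : d ∈ Q := (hmemQ d).mpr ⟨hda, hdb⟩
  -- every edge splits P or Q
  have main : ∀ e, ((P ∩ side e).Nonempty ∧ (P \ side e).Nonempty)
      ∨ ((Q ∩ side e).Nonempty ∧ (Q \ side e).Nonempty) := by
    intro e
    rcases (P ∩ side e).eq_empty_or_nonempty with hPi | hPi
    · rcases (Q ∩ side e).eq_empty_or_nonempty with hQi | hQi
      · -- side e empty, contradiction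
        exfalso
        obtain ⟨z, hz⟩ := (hnontriv e).1
        by_cases hzP : z ∈ P
        · exact absurd (hPi ▸ mem_inter.mpr ⟨hzP, hz⟩) (Finset.notMem_empty z)
        · have hzQ : z ∈ Q := mem_sdiff.mpr ⟨mem_univ z, hzP⟩
          exact absurd (hQi ▸ mem_inter.mpr ⟨hzQ, hz⟩) (Finset.notMem_empty z)
      · rcases (Q \ side e).eq_empty_or_nonempty with hQd | hQd
        · -- P ∩ side e = ∅, Q ⊆ side e : contradict compatibility with e₀
          exfalso
          have hase : a ∉ side e := fun h =>
            absurd (hPi ▸ mem_inter.mpr ⟨haP, h⟩) (Finset.notMem_empty a)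
          have hbse : b ∉ side e := fun h =>
            absurd (hPi ▸ mem_inter.mpr ⟨hbP, h⟩) (Finset.notMem_empty b)
          have hcse : c ∈ side e := by
            by_contra h
            exact absurd (hQd ▸ mem_sdiff.mpr ⟨hcQ, h⟩) (Finset.notMem_empty c)
          have hdse : d ∈ side e := by
            by_contra h
            exact absurd (hQd ▸ mem_sdiff.mpr ⟨hdQ, h⟩) (Finset.notMem_empty d)
          rcases hcompat e₀ e with h | h | h | h
          · exact absurd (h ▸ mem_inter.mpr ⟨hc, hcse⟩) (Finset.notMem_empty c)
          · exact absurd (h ▸ mem_sdiff.mpr ⟨ha, hase⟩) (Finset.notMem_empty a)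
          · exact absurd (h ▸ mem_sdiff.mpr ⟨hdse, hd'⟩) (Finset.notMem_empty d)
          · have : b ∈ side e₀ ∪ side e := h ▸ mem_univ b
            rcases mem_union.mp this with h' | h'
            · exact hb h'
            · exact hbse h'
        · exact Or.inr ⟨hQi, hQd⟩
    · rcases (P \ side e).eq_empty_or_nonempty with hPd | hPd
      · rcases (Q \ side e).eq_empty_or_nonempty with hQd | hQd
        · -- side e = univ, contradiction
          exfalso
          apply (hnontriv e).2
          apply eq_univ_iff_forall.mpr
          intro z
          by_cases hzP : z ∈ P
          · by_contra h
            exact absurd (hPd ▸ mem_sdiff.mpr ⟨hzP, h⟩) (Finset.notMem_empty z)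
          · have hzQ : z ∈ Q := mem_sdiff.mpr ⟨mem_univ z, hzP⟩
            by_contra h
            exact absurd (hQd ▸ mem_sdiff.mpr ⟨hzQ, h⟩) (Finset.notMem_empty z)
        · rcases (Q ∩ side e).eq_empty_or_nonempty with hQi | hQi
          · -- P ⊆ side e, Q ∩ side e = ∅ : contradict compatibility with e₀
            exfalso
            have hase : a ∈ side e := by
              by_contra h
              exact absurd (hPd ▸ mem_sdiff.mpr ⟨haP, h⟩) (Finset.notMem_empty a)
            have hbse : b ∈ side e := by
              by_contra h
              exact absurd (hPd ▸ mem_sdiff.mpr ⟨hbP, h⟩) (Finset.notMem_empty b)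
            have hcse : c ∉ side e := fun h =>
              absurd (hQi ▸ mem_inter.mpr ⟨hcQ, h⟩) (Finset.notMem_empty c)
            have hdse : d ∉ side e := fun h =>
              absurd (hQi ▸ mem_inter.mpr ⟨hdQ, h⟩) (Finset.notMem_empty d)
            rcases hcompat e₀ e with h | h | h | h
            · exact absurd (h ▸ mem_inter.mpr ⟨ha, hase⟩) (Finset.notMem_empty a)
            · exact absurd (h ▸ mem_sdiff.mpr ⟨hc, hcse⟩) (Finset.notMem_empty c)
            · exact absurd (h ▸ mem_sdiff.mpr ⟨hbse, hb⟩) (Finset.notMem_empty b)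
            · have : d ∈ side e₀ ∪ side e := h ▸ mem_univ d
              rcases mem_union.mp this with h' | h'
              · exact hd' h'
              · exact hdse h'
          · exact Or.inr ⟨hQi, hQd⟩
      · exact Or.inl ⟨hPi, hPd⟩
  -- e₀ splits both P and Q
  have hP0 : (P ∩ side e₀).Nonempty ∧ (P \ side e₀).Nonempty :=
    ⟨⟨a, mem_inter.mpr ⟨haP, ha⟩⟩, ⟨b, mem_sdiff.mpr ⟨hbP, hb⟩⟩⟩
  have hQ0 : (Q ∩ side e₀).Nonempty ∧ (Q \ side e₀).Nonempty :=
    ⟨⟨c, mem_inter.mpr ⟨hcQ, hc⟩⟩, ⟨d, mem_sdiff.mpr ⟨hdQ, hd'⟩⟩⟩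
  -- the universe is split by every edge
  have huniv : ∀ e : E, ((univ ∩ side e).Nonempty ∧ ((univ : Finset (Fin n)) \ side e).Nonempty) := by
    intro e
    constructor
    · obtain ⟨z, hz⟩ := (hnontriv e).1
      exact ⟨z, mem_inter.mpr ⟨mem_univ z, hz⟩⟩
    · obtain ⟨z, hz⟩ : ∃ z, z ∉ side e := by
        by_contra h
        push_neg at h
        exact (hnontriv e).2 (eq_univ_iff_forall.mpr h)
      exact ⟨z, mem_sdiff.mpr ⟨mem_univ z, hz⟩⟩
  have key : ∀ e : E,
      α e + (if e = e₀ then α e₀ else 0) ≤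
        α e * (if (P ∩ side e).Nonempty ∧ (P \ side e).Nonempty then 1 else 0)
        + α e * (if (Q ∩ side e).Nonempty ∧ (Q \ side e).Nonempty then 1 else 0) := by
    intro e
    by_cases he : e = e₀
    · subst he
      rw [if_pos hP0, if_pos hQ0, if_pos rfl]
      linarith
    · rw [if_neg he]
      have h0 := hα e
      have hm := main e
      split_ifs with h1 h2 h2
      · linarith
      · linarith
      · linarith
      · exact absurd (hm.resolve_left h1) h2
  have hsum : treeGame side α univ + α e₀ ≤ treeGame side α P + treeGame side α Q := by
    have h1 : treeGame side α P + treeGame side α Q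
        = ∑ e, (α e * (if (P ∩ side e).Nonempty ∧ (P \ side e).Nonempty then 1 else 0)
          + α e * (if (Q ∩ side e).Nonempty ∧ (Q \ side e).Nonempty then 1 else 0)) := by
      rw [treeGame, treeGame, ← Finset.sum_add_distrib]
    have h2 : treeGame side α univ + α e₀ = ∑ e, (α e + if e = e₀ then α e₀ else 0) := by
      rw [Finset.sum_add_distrib, Finset.sum_ite_eq' univ e₀ (fun _ => α e₀)]
      simp only [mem_univ, if_pos]
      congr 1
      rw [treeGame]
      exact Finset.sum_congr rfl fun e _ => by rw [if_pos (huniv e), mul_one]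
    rw [h1, h2]
    exact Finset.sum_le_sum fun e _ => key e
  have hPle : treeGame side α P ≤ ∑ i ∈ P, x i := hcore P
  have hQle : treeGame side α Q ≤ ∑ i ∈ Q, x i := hcore Q
  have hsplit : ∑ i ∈ Q, x i + ∑ i ∈ P, x i = ∑ i, x i :=
    Finset.sum_sdiff (subset_univ P)
  linarith
end
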